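/- arXiv:math/0302307 — 3 statements merged into one kernel-verified Lean document; each statement's English description precedes it below -/
import Mathlib

section
/- Let S ⊆ V be a nonempty stable set with characteristic vector x ∈ {0,1}^V, and let X = (1/(x^T x)) · x x^T. Then X is symmetric positive semidefinite, tr(X) = 1, and X_{ij} = 0 for every edge (i,j) ∈ E; that is, X is feasible for relaxation (7). Moreover, when all weights equal 1 (so that the cost matrix W is the all-ones matrix), tr(WX) = |S|. -/
open Matrix

def charVec {V : Type*} [DecidableEq V] (R : Type*) [Zero R] [One R] (S : Finset V) : V → R :=
  fun i => if i ∈ S then 1 else 0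

section CharVec

variable {V R : Type*} [DecidableEq V] (S : Finset V)

theorem sum_charVec [Fintype V] [AddCommMonoidWithOne R] : ∑ i, charVec R S i = S.card := by
  simp [charVec]

theorem dotProduct_charVec_self [Fintype V] [NonAssocSemiring R] :
    charVec R S ⬝ᵥ charVec R S = S.card := by
  simp [charVec, dotProduct]

theorem charVec_mul_charVec_eq_zero_of_adj [MulZeroOneClass R] {G : SimpleGraph V}
    (hS : ∀ i ∈ S, ∀ j ∈ S, ¬ G.Adj i j) {i j : V} (hij : G.Adj i j) :
    charVec R S i * charVec R S j = 0 := by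
  by_cases hi : i ∈ S
  · have hj : j ∉ S := fun hj => hS i hi j hj hij
    simp [charVec, hj]
  · simp [charVec, hi]

end CharVec

theorem trace_mul_of_forall_apply_eq_one {n R : Type*} [Fintype n] [NonAssocSemiring R]
    {J : Matrix n n R} (hJ : ∀ i j, J i j = 1) (A : Matrix n n R) :
    trace (J * A) = ∑ i, ∑ j, A i j := by
  simp only [trace, Matrix.diag, mul_apply, hJ, one_mul]
  exact Finset.sum_comm

theorem sum_vecMulVec_self {n R : Type*} [Fintype n] [CommSemiring R] (x : n → R) :
    ∑ i, ∑ j, vecMulVec x x i j = (∑ i, x i) ^ 2 := by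
  simp [vecMulVec_apply, sq, Fintype.sum_mul_sum]

/-- Let `S` be a nonempty stable set with characteristic vector `x`, and let
`X = (1/(xᵀx)) · x xᵀ`.  Then `X` is symmetric positive semidefinite,
`tr X = 1`, and `X i j = 0` on every edge, i.e. `X` is feasible for
relaxation (7); moreover with all weights `1` (cost matrix the all-ones
matrix `J`), `tr(J X) = |S|`. -/
theorem stmt_8 {V : Type*} [Fintype V] [DecidableEq V] (G : SimpleGraph V)
    (S : Finset V) (hne : S.Nonempty) (hS : ∀ i ∈ S, ∀ j ∈ S, ¬ G.Adj i j)
    (x : V → ℝ) (hx : ∀ i, x i = if i ∈ S then 1 else 0)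
    (X : Matrix V V ℝ) (hX : X = (1 / (x ⬝ᵥ x)) • Matrix.vecMulVec x x)
    (J : Matrix V V ℝ) (hJ : ∀ i j, J i j = 1) :
    X.PosSemidef ∧ Matrix.trace X = 1 ∧
      (∀ i j, G.Adj i j → X i j = 0) ∧
      Matrix.trace (J * X) = (S.card : ℝ) := by
  obtain rfl : x = charVec ℝ S := funext hx
  rw [dotProduct_charVec_self] at hX
  subst hX
  have hcard : (S.card : ℝ) ≠ 0 := by exact_mod_cast hne.card_pos.ne'
  refine ⟨?_, ?_, fun i j hij => ?_, ?_⟩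
  · have hpsd := (posSemidef_vecMulVec_self_star (charVec ℝ S)).smul
      (by positivity : (0 : ℝ) ≤ 1 / S.card)
    rwa [star_trivial] at hpsd
  · rw [trace_smul, trace_vecMulVec, dotProduct_charVec_self, smul_eq_mul, one_div,
      inv_mul_cancel₀ hcard]
  · rw [Matrix.smul_apply, vecMulVec_apply, charVec_mul_charVec_eq_zero_of_adj S hS hij,
      smul_zero]
  · rw [trace_mul_of_forall_apply_eq_one hJ]
    simp only [Matrix.smul_apply, ← Finset.mul_sum, sum_vecMulVec_self, sum_charVec, smul_eq_mul]
    field_simp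
end

section
/- Suppose w_i > 0 for every i ∈ V, let S ⊆ V be a nonempty stable set, and define the vector x ∈ ℝ^V by x_i = √(w_i) for i ∈ S and x_i = 0 otherwise. Then X = (1/(x^T x)) · x x^T is feasible for relaxation (7) and tr(WX) = w(S) = Σ_{i∈S} w_i. -/
open Matrix

/-!
The vector `x` is supported on `S`, and on `S × S` the cost matrix `W` coincides with `x xᵀ`
(`√(wᵢ wⱼ) = √wᵢ √wⱼ`, and `wᵢ = (√wᵢ)²` on the diagonal). Hence `tr(W x xᵀ) = xᵀ W x = (xᵀx)²`,
and after normalising by `xᵀx = w(S) > 0` the trace is `w(S)`. Feasibility is immediate: `x xᵀ` is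
positive semidefinite with trace `xᵀx`, and an edge has an endpoint outside the stable set `S`,
where `x` vanishes.
-/

namespace Matrix

variable {n R : Type*} [Fintype n]

theorem trace_mul_vecMulVec_self_of_eq_on_support [CommRing R] {W : Matrix n n R} {x : n → R}
    (hW : ∀ i j, x i ≠ 0 → x j ≠ 0 → W i j = x i * x j) :
    trace (W * vecMulVec x x) = (x ⬝ᵥ x) ^ 2 := by
  have hentry : ∀ i j, x i * (W i j * x j) = x i ^ 2 * x j ^ 2 := fun i j => by
    by_cases hi : x i = 0
    · simp [hi]
    by_cases hj : x j = 0
    · simp [hj]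
    rw [hW i j hi hj]
    ring
  calc trace (W * vecMulVec x x) = x ⬝ᵥ W *ᵥ x := by
        rw [mul_vecMulVec, trace_vecMulVec, dotProduct_comm]
    _ = ∑ i, ∑ j, x i ^ 2 * x j ^ 2 := by
        simp only [dotProduct, mulVec, Finset.mul_sum, hentry]
    _ = (x ⬝ᵥ x) ^ 2 := by
        rw [sq, ← Finset.sum_mul_sum]
        simp only [dotProduct, sq]

theorem trace_one_div_dotProduct_smul_vecMulVec_self [Field R] {x : n → R} (hx : x ⬝ᵥ x ≠ 0) :
    trace ((1 / (x ⬝ᵥ x)) • vecMulVec x x) = 1 := by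
  rw [trace_smul, trace_vecMulVec, smul_eq_mul, one_div_mul_cancel hx]

theorem posSemidef_smul_vecMulVec_self {c : ℝ} (hc : 0 ≤ c) (x : n → ℝ) :
    (c • vecMulVec x x).PosSemidef :=
  (posSemidef_vecMulVec_self_star x).smul hc

end Matrix

section SqrtIndicator

variable {V : Type*} [DecidableEq V] {w : V → ℝ} {S : Finset V}

noncomputable def sqrtIndicator (S : Finset V) (w : V → ℝ) (i : V) : ℝ :=
  if i ∈ S then Real.sqrt (w i) else 0

theorem mem_of_sqrtIndicator_ne_zero {i : V} (hi : sqrtIndicator S w i ≠ 0) : i ∈ S := by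
  by_contra h
  exact hi (if_neg h)

theorem dotProduct_sqrtIndicator_self [Fintype V] (hw : ∀ i ∈ S, 0 ≤ w i) :
    sqrtIndicator S w ⬝ᵥ sqrtIndicator S w = ∑ i ∈ S, w i := by
  have hsq : ∀ i, sqrtIndicator S w i * sqrtIndicator S w i = if i ∈ S then w i else 0 :=
    fun i => by
      unfold sqrtIndicator
      split_ifs with hi
      · exact Real.mul_self_sqrt (hw i hi)
      · exact mul_zero 0
  simp only [dotProduct, hsq, Finset.sum_ite_mem, Finset.univ_inter]

theorem sqrtIndicator_mul_eq_zero_of_adj {G : SimpleGraph V} (hS : ∀ i ∈ S, ∀ j ∈ S, ¬ G.Adj i j)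
    {i j : V} (hij : G.Adj i j) : sqrtIndicator S w i * sqrtIndicator S w j = 0 := by
  by_contra h
  obtain ⟨hi, hj⟩ := mul_ne_zero_iff.mp h
  exact hS i (mem_of_sqrtIndicator_ne_zero hi) j (mem_of_sqrtIndicator_ne_zero hj) hij

theorem eq_mul_sqrtIndicator_of_ne_zero {W : Matrix V V ℝ} (hw : ∀ i ∈ S, 0 ≤ w i)
    (hW : ∀ i j, W i j = if i = j then w i else Real.sqrt (w i * w j)) (i j : V)
    (hi : sqrtIndicator S w i ≠ 0) (hj : sqrtIndicator S w j ≠ 0) :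
    W i j = sqrtIndicator S w i * sqrtIndicator S w j := by
  have hiS := mem_of_sqrtIndicator_ne_zero hi
  have hjS := mem_of_sqrtIndicator_ne_zero hj
  rw [hW, sqrtIndicator, sqrtIndicator, if_pos hiS, if_pos hjS]
  split_ifs with hij
  · subst hij
    exact (Real.mul_self_sqrt (hw i hiS)).symm
  · exact Real.sqrt_mul (hw i hiS) _

end SqrtIndicator

/-- Suppose `w i > 0` for every vertex, let `S` be a nonempty stable set, and
put `x i = √(w i)` for `i ∈ S` and `x i = 0` otherwise.  Then
`X = (1/(xᵀx)) · x xᵀ` is feasible for relaxation (7) — positive semidefinite,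
`tr X = 1`, `X i j = 0` on edges — and with the cost matrix
`W i i = w i`, `W i j = √(w i * w j)` for `i ≠ j`, one has
`tr(W X) = w(S) = ∑ i in S, w i`. -/
theorem stmt_9 {V : Type*} [Fintype V] [DecidableEq V] (G : SimpleGraph V)
    (w : V → ℝ) (hw : ∀ i, 0 < w i)
    (S : Finset V) (hne : S.Nonempty) (hS : ∀ i ∈ S, ∀ j ∈ S, ¬ G.Adj i j)
    (x : V → ℝ) (hx : ∀ i, x i = if i ∈ S then Real.sqrt (w i) else 0)
    (X : Matrix V V ℝ) (hX : X = (1 / (x ⬝ᵥ x)) • Matrix.vecMulVec x x)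
    (W : Matrix V V ℝ)
    (hW : ∀ i j, W i j = if i = j then w i else Real.sqrt (w i * w j)) :
    (X.PosSemidef ∧ Matrix.trace X = 1 ∧ ∀ i j, G.Adj i j → X i j = 0) ∧
      Matrix.trace (W * X) = ∑ i ∈ S, w i := by
  obtain rfl : x = sqrtIndicator S w := funext hx
  subst hX
  have hw₀ : ∀ i ∈ S, 0 ≤ w i := fun i _ => (hw i).le
  have hxx := dotProduct_sqrtIndicator_self hw₀
  have hpos : 0 < sqrtIndicator S w ⬝ᵥ sqrtIndicator S w :=
    hxx ▸ Finset.sum_pos (fun i _ => hw i) hne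
  refine ⟨⟨posSemidef_smul_vecMulVec_self (by positivity) _,
    trace_one_div_dotProduct_smul_vecMulVec_self hpos.ne', fun i j hij => ?_⟩, ?_⟩
  · rw [Matrix.smul_apply, vecMulVec_apply, sqrtIndicator_mul_eq_zero_of_adj hS hij, smul_zero]
  · rw [Matrix.mul_smul, trace_smul,
      trace_mul_vecMulVec_self_of_eq_on_support (eq_mul_sqrtIndicator_of_ne_zero hw₀ hW),
      smul_eq_mul, ← hxx]
    field_simp
end

section
/- Suppose w_i > 0 for every i ∈ V and V is nonempty. Then α(G,w) ≤ sup{tr(WX) : X feasible for relaxation (7)}; that is, the optimal value of relaxation (7) is an upper bound on the maximum weight of a stable set. -/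
/-!
The cost matrix is the rank-one matrix `√w √wᵀ`. For a nonempty stable set `S`, let `x` be `√w`
restricted to `S`: then `X = x xᵀ / ‖x‖²` is feasible (stability gives `x i * x j = 0` on edges)
and `tr (W X) = ⟨√w, x⟩² / ‖x‖² = w(S)`. The values of the relaxation are bounded above because a
positive semidefinite matrix of trace one has entries of absolute value at most one, and the
empty stable set is dominated by any singleton.
-/

open Matrix

/-- `X` is feasible for relaxation (7). -/
def Feasible7 {V : Type*} [Fintype V] (G : SimpleGraph V)
    (X : Matrix V V ℝ) : Prop :=
  X.PosSemidef ∧ Matrix.trace X = 1 ∧ ∀ i j, G.Adj i j → X i j = 0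

namespace Matrix.PosSemidef

variable {n : Type*} [Fintype n] {X : Matrix n n ℝ}

theorem two_mul_abs_apply_le (hX : X.PosSemidef) (i j : n) :
    2 * |X i j| ≤ X i i + X j j := by
  classical
  have hsymm : X j i = X i j := by simpa using congrFun (congrFun hX.isHermitian i) j
  have hquad : ∀ c : ℝ, 0 ≤ X i i + 2 * c * X i j + c ^ 2 * X j j := fun c => by
    have := hX.dotProduct_mulVec_nonneg (Pi.single i 1 + c • Pi.single j 1)
    simp only [star_trivial, dotProduct_add, add_dotProduct, mulVec_add, mulVec_smul,
      dotProduct_smul, smul_dotProduct, single_dotProduct,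
      mulVec_single_one, col_apply, smul_eq_mul, hsymm] at this
    linarith
  rcases abs_cases (X i j) with ⟨h, -⟩ | ⟨h, -⟩ <;> rw [h] <;> linarith [hquad 1, hquad (-1)]

theorem apply_le_trace (hX : X.PosSemidef) (i : n) : X i i ≤ X.trace :=
  Finset.single_le_sum (fun k _ => hX.diag_nonneg (i := k)) (Finset.mem_univ i)

theorem abs_apply_le_trace (hX : X.PosSemidef) (i j : n) : |X i j| ≤ X.trace := by
  linarith [hX.two_mul_abs_apply_le i j, hX.apply_le_trace i, hX.apply_le_trace j]

end Matrix.PosSemidef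

section Relaxation

variable {V : Type*} [Fintype V] {G : SimpleGraph V}

theorem trace_mul_le_of_feasible7 (W : Matrix V V ℝ) {X : Matrix V V ℝ} (hX : Feasible7 G X) :
    trace (W * X) ≤ ∑ i, ∑ j, |W i j| := by
  obtain ⟨hpsd, htr, -⟩ := hX
  calc trace (W * X) = ∑ i, ∑ j, W i j * X j i := by simp only [trace, diag, mul_apply]
    _ ≤ ∑ i, ∑ j, |W i j| * |X j i| :=
      Finset.sum_le_sum fun i _ => Finset.sum_le_sum fun j _ =>
        (le_abs_self _).trans (abs_mul _ _).le
    _ ≤ ∑ i, ∑ j, |W i j| :=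
      Finset.sum_le_sum fun i _ => Finset.sum_le_sum fun j _ =>
        mul_le_of_le_one_right (abs_nonneg _) (htr ▸ hpsd.abs_apply_le_trace j i)

theorem bddAbove_trace_mul_feasible7 (G : SimpleGraph V) (W : Matrix V V ℝ) :
    BddAbove {v : ℝ | ∃ X : Matrix V V ℝ, Feasible7 G X ∧ v = trace (W * X)} := by
  refine ⟨∑ i, ∑ j, |W i j|, ?_⟩
  rintro v ⟨X, hX, rfl⟩
  exact trace_mul_le_of_feasible7 W hX

theorem feasible7_smul_vecMulVec {x : V → ℝ} (hx : x ≠ 0)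
    (hadj : ∀ i j, G.Adj i j → x i * x j = 0) :
    Feasible7 G ((x ⬝ᵥ x)⁻¹ • vecMulVec x x) := by
  have hxx : x ⬝ᵥ x ≠ 0 := mt dotProduct_self_eq_zero.mp hx
  refine ⟨?_, ?_, fun i j hij => ?_⟩
  · simpa using
      (posSemidef_vecMulVec_self_star x).smul (inv_nonneg.mpr (dotProduct_self_star_nonneg x))
  · rw [trace_smul, trace_vecMulVec, smul_eq_mul, inv_mul_cancel₀ hxx]
  · simp [vecMulVec_apply, hadj i j hij]

theorem trace_vecMulVec_mul_smul_vecMulVec (r x : V → ℝ) :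
    trace (vecMulVec r r * ((x ⬝ᵥ x)⁻¹ • vecMulVec x x)) = (r ⬝ᵥ x) ^ 2 / (x ⬝ᵥ x) := by
  rw [mul_smul_comm, vecMulVec_mul_vecMulVec, trace_smul, trace_vecMulVec, dotProduct_smul,
    smul_eq_mul, smul_eq_mul, dotProduct_comm r x]
  ring

theorem exists_feasible7_trace_eq_sum_of_stable {w : V → ℝ} (hw : ∀ i, 0 < w i) {S : Finset V}
    (hS : ∀ i ∈ S, ∀ j ∈ S, ¬ G.Adj i j) (hne : S.Nonempty) :
    ∃ X, Feasible7 G X ∧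
      trace (vecMulVec (fun i => √(w i)) (fun i => √(w i)) * X) = ∑ i ∈ S, w i := by
  classical
  set x : V → ℝ := fun i => if i ∈ S then √(w i) else 0
  have hrx : (fun i => √(w i)) ⬝ᵥ x = ∑ i ∈ S, w i := by
    simp only [dotProduct, x, mul_ite, mul_zero, Real.mul_self_sqrt (hw _).le,
      Finset.sum_ite_mem, Finset.univ_inter]
  have hxx : x ⬝ᵥ x = ∑ i ∈ S, w i := by
    simp only [dotProduct, x, mul_ite, ite_mul, zero_mul, mul_zero,
      Real.mul_self_sqrt (hw _).le, Finset.sum_ite_mem, Finset.univ_inter, Finset.inter_self]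
  have hx : x ≠ 0 := by
    obtain ⟨i, hi⟩ := hne
    exact fun h => (Real.sqrt_pos.mpr (hw i)).ne' (by simpa [x, hi] using congrFun h i)
  have hadj : ∀ i j, G.Adj i j → x i * x j = 0 := fun i j hij => by
    by_cases hi : i ∈ S
    · by_cases hj : j ∈ S
      · exact absurd hij (hS i hi j hj)
      · simp [x, hj]
    · simp [x, hi]
  refine ⟨_, feasible7_smul_vecMulVec hx hadj, ?_⟩
  have hpos : 0 < ∑ i ∈ S, w i := Finset.sum_pos (fun i _ => hw i) hne
  rw [trace_vecMulVec_mul_smul_vecMulVec, hrx, hxx]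
  field_simp

end Relaxation

theorem costMatrix_eq_vecMulVec_sqrt {V : Type*} [DecidableEq V] {w : V → ℝ}
    (hw : ∀ i, 0 ≤ w i) {W : Matrix V V ℝ}
    (hW : ∀ i j, W i j = if i = j then w i else √(w i * w j)) :
    W = vecMulVec (fun i => √(w i)) (fun i => √(w i)) := by
  ext i j
  rw [hW, vecMulVec_apply]
  split_ifs with hij
  · rw [hij, Real.mul_self_sqrt (hw j)]
  · rw [Real.sqrt_mul (hw i)]

/-- Suppose all weights are positive and `V` is nonempty.  Then
`α(G,w) ≤ sup { tr(W X) : X feasible for (7) }`, where the cost matrix is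
`W i i = w i`, `W i j = √(w i * w j)` for `i ≠ j`: the optimal value of
relaxation (7) is an upper bound on the maximum weight of a stable set. -/
theorem stmt_15 {V : Type*} [Fintype V] [Nonempty V] [DecidableEq V]
    (G : SimpleGraph V) (w : V → ℝ) (hw : ∀ i, 0 < w i)
    (W : Matrix V V ℝ)
    (hW : ∀ i j, W i j = if i = j then w i else Real.sqrt (w i * w j)) :
    sSup {v : ℝ | ∃ S : Finset V,
        (∀ i ∈ S, ∀ j ∈ S, ¬ G.Adj i j) ∧ v = ∑ i ∈ S, w i} ≤
      sSup {v : ℝ | ∃ X : Matrix V V ℝ,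
        Feasible7 G X ∧ v = Matrix.trace (W * X)} := by
  have hWr := costMatrix_eq_vecMulVec_sqrt (fun i => (hw i).le) hW
  have hle : ∀ S : Finset V, (∀ i ∈ S, ∀ j ∈ S, ¬ G.Adj i j) → S.Nonempty →
      ∑ i ∈ S, w i ≤ sSup {v : ℝ | ∃ X : Matrix V V ℝ, Feasible7 G X ∧ v = trace (W * X)} :=
    fun S hS hne => by
      obtain ⟨X, hX, htr⟩ := exists_feasible7_trace_eq_sum_of_stable hw hS hne
      exact le_csSup (bddAbove_trace_mul_feasible7 G W) ⟨X, hX, by rw [hWr, htr]⟩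
  refine csSup_le ⟨0, ∅, by simp, by simp⟩ ?_
  rintro v ⟨S, hS, rfl⟩
  rcases S.eq_empty_or_nonempty with rfl | hne
  · obtain ⟨i⟩ := ‹Nonempty V›
    calc ∑ j ∈ ∅, w j = 0 := Finset.sum_empty
      _ ≤ ∑ j ∈ {i}, w j := by simpa using (hw i).le
      _ ≤ _ := hle {i} (by simp) (Finset.singleton_nonempty i)
  · exact hle S hS hne
end
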